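/- (Zoutendijk-like condition.) Let 0 < ρ < σ < 1 and suppose that for every k ≥ 0: (i) 𝓕^k(x_k, d_k) < 0; (ii) f^{a_{k,j}}(x_{k+1}) − f^{a_{k,j}}(x_k) − ρ·α_k·𝓕^k(x_k, d_k)·e ∈ −K for all j ∈ {1,…,ω_k} (Armijo condition); (iii) 𝓕^k(x_{k+1}, d_k) ≥ σ·𝓕^k(x_k, d_k) (standard Wolfe curvature condition); (iv) F(x_k) ⊆ {f^{a_{k,1}}(x_k), …, f^{a_{k,ω_k}}(x_k)} + K. Then the series ∑_{k≥0} 𝓕^k(x_k, d_k)² / ‖d_k‖² converges. -/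

import Mathlib

open Set Pointwise Filter

/-- `𝓕^a(x, d) = max_{1 ≤ j ≤ ω} ψ_e(∇f^{a_j}(x)ᵀ d)`. -/
noncomputable def Fcal {n m p : ℕ} (ψ : EuclideanSpace ℝ (Fin m) → ℝ)
    (f : Fin p → EuclideanSpace ℝ (Fin n) → EuclideanSpace ℝ (Fin m))
    {ω : ℕ} (hω : 0 < ω) (a : Fin ω → Fin p)
    (x d : EuclideanSpace ℝ (Fin n)) : ℝ :=
  Finset.univ.sup' (Finset.univ_nonempty_iff.mpr ⟨⟨0, hω⟩⟩) fun j =>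
    ψ (fderiv ℝ (f (a j)) x d)

/-!
The Armijo condition lowers `μ_k = min_i ψ_e(f^i(x_k))` by `ρ α_k (-𝓕^k(x_k, d_k))` at each
step (the domination condition lets the minimum be attained among the active indices `a_k`),
and `μ_k ≥ M`, so `∑ α_k (-𝓕^k(x_k, d_k))` converges. Since `ψ_e` is sublinear and bounded by
`(2/δ)‖·‖` when `B(e, δ) ⊆ K`, the Lipschitz derivatives make `𝓕^k(·, d_k)` move by at most
`(2/δ) L α_k ‖d_k‖²` along the step, so the curvature condition gives
`(1 - σ)(-𝓕^k(x_k, d_k)) ≤ (2/δ) L α_k ‖d_k‖²`; hence each term of the series is at most a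
constant times `α_k (-𝓕^k(x_k, d_k))`.
-/

theorem summable_of_sufficient_decrease {μ g : ℕ → ℝ} {ρ M : ℝ} (hρ : 0 < ρ)
    (hg : ∀ k, 0 ≤ g k) (hμ : ∀ k, μ (k + 1) ≤ μ k - ρ * g k) (hM : ∀ k, M ≤ μ k) :
    Summable g := by
  have htel : ∀ N, μ N + ρ * ∑ k ∈ Finset.range N, g k ≤ μ 0 := by
    intro N
    induction N with
    | zero => simp
    | succ N ih => rw [Finset.sum_range_succ]; linarith [hμ N]
  refine summable_of_sum_range_le hg (c := (μ 0 - M) / ρ) fun N => ?_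
  rw [le_div_iff₀ hρ]
  linarith [htel N, hM N]

theorem sq_div_sq_le_of_mul_le {t s β D : ℝ} (ht : 0 ≤ t) (hs : 0 < s) (hβ : 0 ≤ β)
    (h : s * t ≤ β * D ^ 2) : t ^ 2 / D ^ 2 ≤ β / s * t := by
  rcases eq_or_ne D 0 with rfl | hD
  · simp only [ne_eq, OfNat.ofNat_ne_zero, not_false_eq_true, zero_pow, div_zero]
    positivity
  rw [div_le_iff₀ (by positivity), div_mul_eq_mul_div, div_mul_eq_mul_div, le_div_iff₀ hs]
  nlinarith [mul_le_mul_of_nonneg_left h ht]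

theorem Convex.add_mem_of_smul_mem {E : Type*} [AddCommGroup E] [Module ℝ E] {K : Set E}
    (hKconv : Convex ℝ K) (hKcone : ∀ t : ℝ, 0 ≤ t → ∀ y ∈ K, t • y ∈ K)
    {u v : E} (hu : u ∈ K) (hv : v ∈ K) : u + v ∈ K := by
  have hmid := hKconv hu hv (by norm_num : (0 : ℝ) ≤ 1 / 2) (by norm_num : (0 : ℝ) ≤ 1 / 2)
    (by norm_num)
  have h2 := hKcone 2 (by norm_num) _ hmid
  rwa [smul_add, smul_smul, smul_smul, show (2 : ℝ) * (1 / 2) = 1 by norm_num, one_smul,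
    one_smul] at h2

section Gerstewitz

variable {E : Type*} {K : Set E} {e : E} {ψ : E → ℝ}

section Algebraic

variable [AddCommGroup E] [Module ℝ E]
  (hψ : ∀ y, IsLeast {t : ℝ | t • e - y ∈ K} (ψ y)) (hK : ∀ u ∈ K, ∀ v ∈ K, u + v ∈ K)

include hψ hK

theorem gerstewitz_le_add_of_mem {y z : E} {c : ℝ} (h : y + c • e - z ∈ K) :
    ψ z ≤ ψ y + c := by
  refine (hψ z).2 ?_
  have hsum := hK _ (hψ y).1 _ h
  rwa [show ψ y • e - y + (y + c • e - z) = (ψ y + c) • e - z by rw [add_smul]; abel] at hsum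

theorem gerstewitz_le_add_sub (u v : E) : ψ u ≤ ψ v + ψ (u - v) :=
  gerstewitz_le_add_of_mem hψ hK <| by
    rw [show v + ψ (u - v) • e - u = ψ (u - v) • e - (u - v) by abel]
    exact (hψ (u - v)).1

theorem inf'_gerstewitz_le_add_of_dominated {ι κ : Type*} [Fintype ι]
    (hne : (Finset.univ : Finset ι).Nonempty) {g g' : ι → E} {b : κ → ι} {c : ℝ}
    (hdom : range g ⊆ range (fun j => g (b j)) + K)
    (hdec : ∀ j, g' (b j) - g (b j) - c • e ∈ -K) :
    Finset.univ.inf' hne (fun i => ψ (g' i)) ≤ Finset.univ.inf' hne (fun i => ψ (g i)) + c := by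
  obtain ⟨i, -, hi⟩ := Finset.exists_mem_eq_inf' hne (fun i => ψ (g i))
  obtain ⟨-, ⟨j, rfl⟩, v, hv, hgi⟩ := hdom ⟨i, rfl⟩
  have hactive : ψ (g (b j)) ≤ ψ (g i) := by
    simpa using gerstewitz_le_add_of_mem hψ hK (y := g i) (z := g (b j)) (c := 0)
      (by rw [← hgi]; simpa using hv)
  have hstep : ψ (g' (b j)) ≤ ψ (g (b j)) + c :=
    gerstewitz_le_add_of_mem hψ hK <| by
      simpa only [show g (b j) + c • e - g' (b j) = -(g' (b j) - g (b j) - c • e) by abel]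
        using Set.mem_neg.mp (hdec j)
  rw [hi]
  linarith [Finset.inf'_le (fun i => ψ (g' i)) (Finset.mem_univ (b j))]

end Algebraic

section Normed

variable [NormedAddCommGroup E] [NormedSpace ℝ E]
  (hψ : ∀ y, IsLeast {t : ℝ | t • e - y ∈ K} (ψ y))
  (hKcone : ∀ t : ℝ, 0 ≤ t → ∀ y ∈ K, t • y ∈ K) {δ : ℝ} (hδ : 0 < δ)
  (hball : Metric.ball e δ ⊆ K)

include hψ hKcone hδ hball

theorem gerstewitz_le_norm (w : E) : ψ w ≤ 2 / δ * ‖w‖ := by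
  rcases eq_or_ne w 0 with rfl | hw
  · have h0 : (0 : ℝ) • e - 0 ∈ K := by
      simpa using hKcone 0 le_rfl e (hball (Metric.mem_ball_self hδ))
    simpa using (hψ 0).2 h0
  have hw : 0 < ‖w‖ := norm_pos_iff.mpr hw
  -- `w` is `2‖w‖/δ` times a vector of norm `δ/2`, and `e` minus that vector lies in `K`
  have hnear : e - (δ / (2 * ‖w‖)) • w ∈ Metric.ball e δ := by
    rw [Metric.mem_ball, dist_eq_norm, sub_sub_cancel_left, norm_neg, norm_smul,
      Real.norm_of_nonneg (by positivity), div_mul_eq_mul_div, div_lt_iff₀ (by positivity)]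
    nlinarith
  have hmem := hKcone (2 * ‖w‖ / δ) (by positivity) _ (hball hnear)
  rw [smul_sub, smul_smul, show 2 * ‖w‖ / δ * (δ / (2 * ‖w‖)) = 1 by field_simp,
    one_smul] at hmem
  calc ψ w ≤ 2 * ‖w‖ / δ := (hψ w).2 hmem
    _ = 2 / δ * ‖w‖ := by ring

theorem gerstewitz_le_add_norm_sub (hK : ∀ u ∈ K, ∀ v ∈ K, u + v ∈ K) (u v : E) :
    ψ u ≤ ψ v + 2 / δ * ‖u - v‖ := by
  linarith [gerstewitz_le_add_sub hψ hK u v, gerstewitz_le_norm hψ hKcone hδ hball (u - v)]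

end Normed

end Gerstewitz

section Fcal

variable {n m p : ℕ} {ψ : EuclideanSpace ℝ (Fin m) → ℝ}
  {f : Fin p → EuclideanSpace ℝ (Fin n) → EuclideanSpace ℝ (Fin m)}
  {ω : ℕ} (hω : 0 < ω) (a : Fin ω → Fin p)

theorem le_Fcal (x d : EuclideanSpace ℝ (Fin n)) (j : Fin ω) :
    ψ (fderiv ℝ (f (a j)) x d) ≤ Fcal ψ f hω a x d :=
  Finset.le_sup' (fun j => ψ (fderiv ℝ (f (a j)) x d)) (Finset.mem_univ j)

theorem Fcal_le_add_of_lipschitz {c r : ℝ} (hc : 0 ≤ c)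
    (hψ : ∀ u v, ψ u ≤ ψ v + c * ‖u - v‖) {x x' d : EuclideanSpace ℝ (Fin n)}
    (hLip : ∀ j, ‖fderiv ℝ (f (a j)) x' - fderiv ℝ (f (a j)) x‖ ≤ r) :
    Fcal ψ f hω a x' d ≤ Fcal ψ f hω a x d + c * (r * ‖d‖) := by
  refine Finset.sup'_le _ _ fun j _ => ?_
  have hdiff : ‖fderiv ℝ (f (a j)) x' d - fderiv ℝ (f (a j)) x d‖ ≤ r * ‖d‖ := by
    rw [← sub_apply]
    exact ((fderiv ℝ (f (a j)) x' - fderiv ℝ (f (a j)) x).le_opNorm d).trans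
      (mul_le_mul_of_nonneg_right (hLip j) (norm_nonneg d))
  linarith [hψ (fderiv ℝ (f (a j)) x' d) (fderiv ℝ (f (a j)) x d),
    le_Fcal (ψ := ψ) (f := f) hω a x d j, mul_le_mul_of_nonneg_left hdiff hc]

theorem Fcal_sq_div_sq_le_of_wolfe {c L σ α : ℝ} (hc : 0 ≤ c) (hL : 0 ≤ L)
    (hσ : σ < 1) (hα : 0 ≤ α) (hψ : ∀ u v, ψ u ≤ ψ v + c * ‖u - v‖)
    {x d : EuclideanSpace ℝ (Fin n)}
    (hLip : ∀ j, ‖fderiv ℝ (f (a j)) (x + α • d) - fderiv ℝ (f (a j)) x‖ ≤ L * (α * ‖d‖))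
    (hdesc : Fcal ψ f hω a x d ≤ 0)
    (hWolfe : σ * Fcal ψ f hω a x d ≤ Fcal ψ f hω a (x + α • d) d) :
    Fcal ψ f hω a x d ^ 2 / ‖d‖ ^ 2 ≤ c * L / (1 - σ) * (α * -Fcal ψ f hω a x d) := by
  set F := Fcal ψ f hω a x d
  have hmove := Fcal_le_add_of_lipschitz (d := d) hω a hc hψ hLip
  have hcurv : (1 - σ) * -F ≤ c * L * α * ‖d‖ ^ 2 := by nlinarith
  calc F ^ 2 / ‖d‖ ^ 2 = (-F) ^ 2 / ‖d‖ ^ 2 := by rw [neg_sq]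
    _ ≤ c * L * α / (1 - σ) * -F :=
      sq_div_sq_le_of_mul_le (neg_nonneg.mpr hdesc) (by linarith) (by positivity) hcurv
    _ = c * L / (1 - σ) * (α * -F) := by ring

end Fcal

theorem statement14_general {n m p : ℕ} (K : Set (EuclideanSpace ℝ (Fin m)))
    (hKconv : Convex ℝ K)
    (hKcone : ∀ t : ℝ, 0 ≤ t → ∀ y ∈ K, t • y ∈ K)
    (e : EuclideanSpace ℝ (Fin m)) (he : e ∈ interior K)
    (ψ : EuclideanSpace ℝ (Fin m) → ℝ)
    (hψ : ∀ y, IsLeast {t : ℝ | t • e - y ∈ K} (ψ y))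
    (f : Fin p → EuclideanSpace ℝ (Fin n) → EuclideanSpace ℝ (Fin m))
    (x d : ℕ → EuclideanSpace ℝ (Fin n)) (α : ℕ → ℝ)
    (hα : ∀ k, 0 < α k)
    (hstep : ∀ k, x (k + 1) = x k + α k • d k)
    (ω : ℕ → ℕ) (hω : ∀ k, 0 < ω k) (a : ∀ k, Fin (ω k) → Fin p)
    (L : ℝ) (hL : 0 < L)
    (S : Set (EuclideanSpace ℝ (Fin n)))
    (hxS : ∀ k, x k ∈ S)
    (hLip : ∀ i, ∀ v ∈ S, ∀ w ∈ S,
      ‖fderiv ℝ (f i) v - fderiv ℝ (f i) w‖ ≤ L * ‖v - w‖)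
    (M : ℝ) (hM : ∀ (i : Fin p) (k : ℕ), M ≤ ψ (f i (x k)))
    (ρ σ : ℝ) (hρ0 : 0 < ρ) (hσ1 : σ < 1)
    (hdesc : ∀ k, Fcal ψ f (hω k) (a k) (x k) (d k) < 0)
    (hArmijo : ∀ k, ∀ j : Fin (ω k),
      f (a k j) (x (k + 1)) - f (a k j) (x k)
        - (ρ * α k * Fcal ψ f (hω k) (a k) (x k) (d k)) • e ∈ -K)
    (hWolfe : ∀ k, Fcal ψ f (hω k) (a k) (x (k + 1)) (d k) ≥
      σ * Fcal ψ f (hω k) (a k) (x k) (d k))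
    (hdom : ∀ k, Set.range (fun i => f i (x k)) ⊆
      Set.range (fun j => f (a k j) (x k)) + K) :
    Summable fun k => (Fcal ψ f (hω k) (a k) (x k) (d k)) ^ 2 / ‖d k‖ ^ 2 := by
  obtain ⟨δ, hδ, hball⟩ := Metric.isOpen_iff.mp isOpen_interior e he
  have hK : ∀ u ∈ K, ∀ v ∈ K, u + v ∈ K := fun _ hu _ hv =>
    hKconv.add_mem_of_smul_mem hKcone hu hv
  have hψLip := gerstewitz_le_add_norm_sub hψ hKcone hδ (hball.trans interior_subset) hK
  set F := fun k => Fcal ψ f (hω k) (a k) (x k) (d k)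
  have hp : (Finset.univ : Finset (Fin p)).Nonempty := ⟨a 0 ⟨0, hω 0⟩, Finset.mem_univ _⟩
  have hsum : Summable fun k => α k * -F k := by
    refine summable_of_sufficient_decrease hρ0
      (fun k => mul_nonneg (hα k).le (neg_nonneg.mpr (hdesc k).le))
      (μ := fun k => Finset.univ.inf' hp fun i => ψ (f i (x k)))
      (fun k => ?_) (fun k => Finset.le_inf' _ _ fun i _ => hM i k)
    have hmin := inf'_gerstewitz_le_add_of_dominated hψ hK hp (g' := fun i => f i (x (k + 1)))
      (hdom k) (hArmijo k)
    linarith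
  refine .of_nonneg_of_le (fun k => by positivity) (fun k => ?_)
    (hsum.mul_left (2 / δ * L / (1 - σ)))
  have hLipk : ∀ j, ‖fderiv ℝ (f (a k j)) (x k + α k • d k) - fderiv ℝ (f (a k j)) (x k)‖
      ≤ L * (α k * ‖d k‖) := by
    intro j
    have := hLip (a k j) _ (hxS (k + 1)) _ (hxS k)
    rwa [hstep, add_sub_cancel_left, norm_smul, Real.norm_of_nonneg (hα k).le] at this
  exact Fcal_sq_div_sq_le_of_wolfe (hω k) (a k) (by positivity) hL.le hσ1 (hα k).le hψLip hLipk
    (hdesc k).le (hstep k ▸ hWolfe k)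

/-- Zoutendijk-like condition: if every step satisfies the
descent condition, the Armijo condition, the standard Wolfe curvature condition
and the domination condition, then `∑_k 𝓕^k(x_k, d_k)² / ‖d_k‖²` converges. -/
theorem statement14 {n m p : ℕ} (K : Set (EuclideanSpace ℝ (Fin m)))
    (hKne : K.Nonempty) (hKclosed : IsClosed K) (hKconv : Convex ℝ K)
    (hKcone : ∀ t : ℝ, 0 ≤ t → ∀ y ∈ K, t • y ∈ K)
    (hKpointed : K ∩ (-K) = {0}) (hKsolid : (interior K).Nonempty)
    (e : EuclideanSpace ℝ (Fin m)) (he : e ∈ interior K)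
    (ψ : EuclideanSpace ℝ (Fin m) → ℝ)
    (hψ : ∀ y, IsLeast {t : ℝ | t • e - y ∈ K} (ψ y))
    (f : Fin p → EuclideanSpace ℝ (Fin n) → EuclideanSpace ℝ (Fin m))
    (hf : ∀ i, ContDiff ℝ 1 (f i))
    (x d : ℕ → EuclideanSpace ℝ (Fin n)) (α : ℕ → ℝ)
    (hα : ∀ k, 0 < α k)
    (hstep : ∀ k, x (k + 1) = x k + α k • d k)
    (ω : ℕ → ℕ) (hω : ∀ k, 0 < ω k) (a : ∀ k, Fin (ω k) → Fin p)
    (L : ℝ) (hL : 0 < L)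
    (S : Set (EuclideanSpace ℝ (Fin n))) (hSopen : IsOpen S) (hSconv : Convex ℝ S)
    (hxS : ∀ k, x k ∈ S)
    (hLip : ∀ i, ∀ v ∈ S, ∀ w ∈ S,
      ‖fderiv ℝ (f i) v - fderiv ℝ (f i) w‖ ≤ L * ‖v - w‖)
    (M : ℝ) (hM : ∀ (i : Fin p) (k : ℕ), M ≤ ψ (f i (x k)))
    (ρ σ : ℝ) (hρ0 : 0 < ρ) (hρσ : ρ < σ) (hσ1 : σ < 1)
    (hdesc : ∀ k, Fcal ψ f (hω k) (a k) (x k) (d k) < 0)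
    (hArmijo : ∀ k, ∀ j : Fin (ω k),
      f (a k j) (x (k + 1)) - f (a k j) (x k)
        - (ρ * α k * Fcal ψ f (hω k) (a k) (x k) (d k)) • e ∈ -K)
    (hWolfe : ∀ k, Fcal ψ f (hω k) (a k) (x (k + 1)) (d k) ≥
      σ * Fcal ψ f (hω k) (a k) (x k) (d k))
    (hdom : ∀ k, Set.range (fun i => f i (x k)) ⊆
      Set.range (fun j => f (a k j) (x k)) + K) :
    Summable fun k => (Fcal ψ f (hω k) (a k) (x k) (d k)) ^ 2 / ‖d k‖ ^ 2 :=
  statement14_general K hKconv hKcone e he ψ hψ f x d α hα hstep ω hω a L hL S hxS hLip M hM ρ σ hρ0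
    hσ1 hdesc hArmijo hWolfe hdom
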